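/- Let H, K be closed subspaces of L² and a ∈ 𝒢L∞ with aK = H. Then, as operators on L², P_H = Ẽ ∘ (P_K ∘ M_ā) and P_H = (M_a ∘ P_K) ∘ F̃, where Ẽ = P_H M_{ā⁻¹} P_K and F̃ = P_K M_{a⁻¹} P_H; moreover T_{ā⁻¹}^{K,H} = Ẽ|_K and T_{a⁻¹}^{H,K} = F̃|_H. -/

import Mathlib

open MeasureTheory

noncomputable section

/-! ## Setup: the circle, L², L∞, multiplication operators, Hardy space,
model spaces, and generalized Toeplitz operators -/

instance : Fact (0 < 2 * Real.pi) := ⟨by positivity⟩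

/-- The normalized Lebesgue (Haar) measure `dθ/2π` on the circle. -/
abbrev μH : Measure (AddCircle (2 * Real.pi)) := AddCircle.haarAddCircle

/-- The Lebesgue space `L²` of the circle. -/
abbrev L2 : Type := Lp ℂ 2 μH

/-- The space `L∞` of essentially bounded functions on the circle. -/
abbrev Linf : Type := Lp ℂ ⊤ μH

/-- Pointwise (a.e.) multiplication on `L∞`. -/
instance : Mul Linf :=
  ⟨fun f g => ((Lp.memLp g).smul (r := ⊤) (Lp.memLp f)).toLp (⇑f • ⇑g)⟩

/-- The constant function `1` as an element of `L∞`. -/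
instance : One Linf := ⟨(memLp_const (1 : ℂ)).toLp (fun _ => (1 : ℂ))⟩

/-- Complex conjugation on `L∞`. -/
instance : Star Linf :=
  ⟨fun f => ((Complex.conjCLE.toContinuousLinearMap).comp_memLp' (Lp.memLp f)).toLp
    ((starRingEnd ℂ) ∘ ⇑f)⟩

/-- Multiplication of an `L²` function by an `L∞` function. -/
def mulFun (φ : Linf) (f : L2) : L2 :=
  ((Lp.memLp f).smul (r := 2) (Lp.memLp φ)).toLp (⇑φ • ⇑f)

lemma mulFun_coe (φ : Linf) (f : L2) : mulFun φ f =ᵐ[μH] ⇑φ • ⇑f :=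
  MemLp.coeFn_toLp _

lemma mulFun_norm_le (φ : Linf) (f : L2) : ‖mulFun φ f‖ ≤ ‖φ‖ * ‖f‖ := by
  rw [mulFun, Lp.norm_toLp, Lp.norm_def, Lp.norm_def, ← ENNReal.toReal_mul]
  refine ENNReal.toReal_mono ?_ ?_
  · exact ENNReal.mul_ne_top (Lp.eLpNorm_ne_top φ) (Lp.eLpNorm_ne_top f)
  · exact eLpNorm_smul_le_eLpNorm_top_mul_eLpNorm 2 (Lp.aestronglyMeasurable f) ⇑φ

/-- The bounded multiplication operator `M_φ : L² → L²` for `φ ∈ L∞`. -/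
def mulCLM (φ : Linf) : L2 →L[ℂ] L2 :=
  LinearMap.mkContinuous
    { toFun := mulFun φ
      map_add' := by
        intro f g
        apply Lp.ext
        filter_upwards [mulFun_coe φ (f + g), mulFun_coe φ f, mulFun_coe φ g,
          Lp.coeFn_add f g, Lp.coeFn_add (mulFun φ f) (mulFun φ g)] with x h1 h2 h3 h4 h5
        simp only [Pi.smul_apply', Pi.add_apply] at *
        rw [h1, h5, h2, h3, h4]
        exact smul_add _ _ _
      map_smul' := by
        intro c f
        apply Lp.ext
        filter_upwards [mulFun_coe φ (c • f), mulFun_coe φ f,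
          Lp.coeFn_smul c f, Lp.coeFn_smul c (mulFun φ f)] with x h1 h2 h3 h4
        simp only [Pi.smul_apply', Pi.smul_apply, RingHom.id_apply] at *
        rw [h1, h4, h2, h3]
        exact smul_comm _ _ _ }
    ‖φ‖ (mulFun_norm_le φ)

/-- The image `a·K = {a f : f ∈ K}` of a subspace `K ⊆ L²` under multiplication by `a ∈ L∞`. -/
def smulSub (a : Linf) (K : Submodule ℂ L2) : Submodule ℂ L2 :=
  K.map (mulCLM a : L2 →ₗ[ℂ] L2)

/-- The Hardy space `H² = {f ∈ L² : f̂(n) = 0 for n < 0}`. -/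
def Hardy : Submodule ℂ L2 where
  carrier := {f | ∀ n : ℤ, n < 0 → fourierBasis.repr f n = 0}
  add_mem' := by
    intro f g hf hg n hn
    rw [map_add, lp.coeFn_add, Pi.add_apply, hf n hn, hg n hn, add_zero]
  zero_mem' := by
    intro n hn
    rw [map_zero, lp.coeFn_zero]
    rfl
  smul_mem' := by
    intro c f hf n hn
    rw [_root_.map_smul, lp.coeFn_smul, Pi.smul_apply, hf n hn, smul_zero]

lemma hardy_isClosed : IsClosed (Hardy : Set L2) := by
  have h : (Hardy : Set L2) =
      ⋂ n : {m : ℤ // m < 0}, {f : L2 | fourierBasis.repr f n.1 = 0} := by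
    ext f
    constructor
    · intro hf
      exact Set.mem_iInter.2 fun n => hf n.1 n.2
    · intro hf n hn
      exact Set.mem_iInter.1 hf ⟨n, hn⟩
  rw [h]
  refine isClosed_iInter fun n => isClosed_eq ?_ continuous_const
  have : (fun f : L2 => fourierBasis.repr f n.1) =
      fun f : L2 => (innerSL ℂ (fourierBasis n.1)) f := by
    funext f
    exact fourierBasis.repr_apply_apply f n.1
  rw [this]
  exact (innerSL ℂ (fourierBasis n.1)).continuous

instance : CompleteSpace Hardy := hardy_isClosed.completeSpace_coe

/-- The model space `K_θ = H² ⊖ θH² = H² ∩ (θH²)^⊥`. -/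
def modelSpace (θ : Linf) : Submodule ℂ L2 :=
  Hardy ⊓ (smulSub θ Hardy)ᗮ

instance (θ : Linf) : CompleteSpace (modelSpace θ) := by
  refine @IsClosed.completeSpace_coe _ _ _ _ ?_
  have h : (modelSpace θ : Set L2) = (Hardy : Set L2) ∩ ((smulSub θ Hardy)ᗮ : Set L2) := rfl
  rw [h]
  exact hardy_isClosed.inter (smulSub θ Hardy).isClosed_orthogonal

/-- The generalized Toeplitz operator `T_φ^{H₁,H₂} = P_{H₂} M_φ |_{H₁}`. -/
def genToeplitz (φ : Linf) (H₁ H₂ : Submodule ℂ L2) [CompleteSpace H₂] : H₁ →L[ℂ] H₂ :=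
  (Submodule.orthogonalProjectionOnto H₂).comp ((mulCLM φ).comp H₁.subtypeL)

/-- The orthogonal projection of `L²` onto `H`, viewed as an operator `L² → L²`. -/
def projL (H : Submodule ℂ L2) [CompleteSpace H] : L2 →L[ℂ] L2 :=
  H.subtypeL.comp (Submodule.orthogonalProjectionOnto H)

/-- `φ ∈ H∞`: all negative Fourier coefficients of `φ` vanish. -/
def IsHardyInf (φ : Linf) : Prop := ∀ n : ℤ, n < 0 → fourierCoeff (⇑φ) n = 0

/-- `θ` is an inner function: `θ ∈ H∞` and `|θ| = 1` a.e. on the circle. -/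
def IsInner (θ : Linf) : Prop :=
  IsHardyInf θ ∧ ∀ᵐ x ∂μH, ‖(θ : AddCircle (2 * Real.pi) → ℂ) x‖ = 1

/-- `a ∈ 𝒢H∞` with explicit inverse `b ∈ H∞`. -/
def GHinfPair (a b : Linf) : Prop := IsHardyInf a ∧ IsHardyInf b ∧ a * b = 1

/-- `a ∈ 𝒢H∞`: `a` is invertible in the algebra `H∞`. -/
def IsGHinf (a : Linf) : Prop := ∃ b, GHinfPair a b

/-- `b ∈ 𝒢H̄∞`: `b` is the conjugate of an element of `𝒢H∞`. -/
def IsGHinfBar (b : Linf) : Prop := ∃ c, IsGHinf c ∧ b = star c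

/-- `a ∈ 𝒢L∞` with explicit inverse `b`. -/
def GLinfPair (a b : Linf) : Prop := a * b = 1 ∧ b * a = 1

/-- `a ∈ 𝒢L∞`: `a` is invertible in the algebra `L∞`. -/
def IsGLinf (a : Linf) : Prop := ∃ b, GLinfPair a b

/-- The kernel of an operator between subspaces of `L²`, viewed as a subspace of `L²`. -/
def subKer {K₁ K₂ : Submodule ℂ L2} (T : K₁ →L[ℂ] K₂) : Submodule ℂ L2 :=
  (LinearMap.ker (T : K₁ →ₗ[ℂ] K₂)).map K₁.subtype

/-- The range of an operator between subspaces of `L²`, viewed as a subspace of `L²`. -/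
def subRan {K₁ K₂ : Submodule ℂ L2} (T : K₁ →L[ℂ] K₂) : Submodule ℂ L2 :=
  (LinearMap.range (T : K₁ →ₗ[ℂ] K₂)).map K₂.subtype

/-- The image of a subspace `S ⊆ K₁` under `T : K₁ → K₂`, viewed as a subspace of `L²`. -/
def opImage {K₁ K₂ : Submodule ℂ L2} (T : K₁ →L[ℂ] K₂) (S : Submodule ℂ K₁) :
    Submodule ℂ L2 :=
  (S.map (T : K₁ →ₗ[ℂ] K₂)).map K₂.subtype

section Antilinear

variable {E : Type*} [NormedAddCommGroup E] [InnerProductSpace ℂ E]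

/-- `C` is antilinear: `C(f + a g) = C f + ā C g`. -/
def IsAntilinearMap (C : E → E) : Prop :=
  ∀ (f g : E) (a : ℂ), C (f + a • g) = C f + (starRingEnd ℂ a) • C g

/-- `Cs` is the antilinear adjoint of `C`: `⟨C f, g⟩ = conj ⟨f, Cs g⟩`. -/
def IsAntilinearAdjointOf (C Cs : E → E) : Prop :=
  ∀ f g : E, (inner ℂ (C f) g : ℂ) = (starRingEnd ℂ) (inner ℂ f (Cs g) : ℂ)

/-- `C` is an antilinear unitary: it is antilinear and its antilinear adjoint is its inverse. -/
def IsAntilinearUnitary (C : E → E) : Prop :=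
  IsAntilinearMap C ∧ ∃ Cs : E → E, IsAntilinearAdjointOf C Cs ∧
    Function.LeftInverse Cs C ∧ Function.RightInverse Cs C

/-- `T` is complex selfadjoint with respect to `C` (with inverse `Cinv`): `C T C⁻¹ = T*`. -/
def IsComplexSelfadjointWith [CompleteSpace E] (T : E →L[ℂ] E) (C Cinv : E → E) : Prop :=
  ∀ f : E, C (T (Cinv f)) = ContinuousLinearMap.adjoint T f

end Antilinear

/-! For bounded operators with `B A = 1` on a Hilbert space and `H = A K`, every `h ∈ H` is
`A g` with `g = B h ∈ K`, whence `P_H = A P_K B P_H`; and for `g ∈ K`,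
`⟪A g, B* P_K A* f⟫ = ⟪g, P_K A* f⟫ = ⟪A g, f⟫`, so `B* P_K A* f - f ⊥ H`, i.e.
`P_H = P_H B* P_K A*`. On `L²` take `A = M_a`, `B = M_{a⁻¹}`, with adjoints `M_ā`, `M_{ā⁻¹}`. -/

open ContinuousLinearMap Submodule

section ProjectionOntoImage

variable {𝕜 E : Type*} [RCLike 𝕜] [NormedAddCommGroup E] [InnerProductSpace 𝕜 E]
  {H K : Submodule 𝕜 E} [H.HasOrthogonalProjection] [K.HasOrthogonalProjection]
  {A B : E →L[𝕜] E}

theorem starProjection_map_eq_comp_adjoint [CompleteSpace E] (hBA : Function.LeftInverse B A)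
    (hH : K.map (A : E →ₗ[𝕜] E) = H) :
    H.starProjection =
      (H.starProjection ∘L adjoint B ∘L K.starProjection) ∘L (K.starProjection ∘L adjoint A) := by
  ext f
  simp only [comp_apply, starProjection_eq_self_iff.mpr (starProjection_apply_mem _ _)]
  rw [← sub_eq_zero, ← map_sub, starProjection_apply_eq_zero_iff, ← hH]
  rintro _ ⟨g, hg, rfl⟩
  rw [ContinuousLinearMap.coe_coe, inner_sub_right, adjoint_inner_right, hBA g,
    ← inner_starProjection_left_eq_right, starProjection_eq_self_iff.mpr hg,
    adjoint_inner_right, sub_self]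

theorem starProjection_map_eq_comp (hBA : Function.LeftInverse B A)
    (hH : K.map (A : E →ₗ[𝕜] E) = H) :
    H.starProjection = (A ∘L K.starProjection) ∘L (K.starProjection ∘L B ∘L H.starProjection) := by
  ext f
  obtain ⟨g, hg, hgf⟩ : H.starProjection f ∈ K.map (A : E →ₗ[𝕜] E) :=
    hH ▸ starProjection_apply_mem H f
  simp only [comp_apply, ← hgf, ContinuousLinearMap.coe_coe, hBA g,
    starProjection_eq_self_iff.mpr hg]

end ProjectionOntoImage

lemma Linf.coeFn_mul (a b : Linf) : ⇑(a * b) =ᵐ[μH] ⇑a • ⇑b :=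
  MemLp.coeFn_toLp _

lemma Linf.coeFn_one : ⇑(1 : Linf) =ᵐ[μH] fun _ => (1 : ℂ) :=
  MemLp.coeFn_toLp _

lemma Linf.coeFn_star (a : Linf) : ⇑(star a) =ᵐ[μH] (starRingEnd ℂ) ∘ ⇑a :=
  MemLp.coeFn_toLp _

lemma coeFn_mulCLM (φ : Linf) (f : L2) : ⇑(mulCLM φ f) =ᵐ[μH] ⇑φ • ⇑f :=
  mulFun_coe φ f

lemma mulCLM_mulCLM (a b : Linf) (f : L2) : mulCLM a (mulCLM b f) = mulCLM (a * b) f := by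
  apply Lp.ext
  filter_upwards [coeFn_mulCLM a (mulCLM b f), coeFn_mulCLM b f, coeFn_mulCLM (a * b) f,
    Linf.coeFn_mul a b] with x ha hb hab hab_coe
  simp only [ha, hab, Pi.smul_apply', hb, hab_coe, smul_eq_mul, mul_assoc]

lemma mulCLM_one (f : L2) : mulCLM 1 f = f := by
  apply Lp.ext
  filter_upwards [coeFn_mulCLM 1 f, Linf.coeFn_one] with x hf h1
  simp [hf, h1]

lemma leftInverse_mulCLM {a b : Linf} (hba : b * a = 1) :
    Function.LeftInverse (mulCLM b) (mulCLM a) := fun f => by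
  rw [mulCLM_mulCLM, hba, mulCLM_one]

lemma adjoint_mulCLM (φ : Linf) : adjoint (mulCLM φ) = mulCLM (star φ) := by
  refine ((eq_adjoint_iff _ _).mpr fun f g => ?_).symm
  rw [MeasureTheory.L2.inner_def, MeasureTheory.L2.inner_def]
  apply integral_congr_ae
  filter_upwards [coeFn_mulCLM (star φ) f, coeFn_mulCLM φ g, Linf.coeFn_star φ] with x hf hg hφ
  simp only [hf, hg, hφ, Pi.smul_apply', Function.comp_apply, smul_eq_mul, RCLike.inner_apply,
    map_mul, RCLike.conj_conj]
  ring

lemma projL_eq_starProjection (H : Submodule ℂ L2) [CompleteSpace H] :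
    projL H = H.starProjection :=
  rfl

lemma coe_genToeplitz_apply (φ : Linf) (H₁ H₂ : Submodule ℂ L2) [CompleteSpace H₁]
    [CompleteSpace H₂] (f : H₁) :
    (genToeplitz φ H₁ H₂ f : L2) = projL H₂ (mulCLM φ (projL H₁ f)) := by
  rw [projL_eq_starProjection H₁, starProjection_eq_self_iff.mpr f.2]
  rfl

/-- Corollary 2.12: if `a ∈ 𝒢L∞` (with inverse `b = a⁻¹`) and
`aK = H`, then `P_H = Ẽ (P_K M_ā) = (M_a P_K) F̃` where `Ẽ = P_H M_{ā⁻¹} P_K`,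
`F̃ = P_K M_{a⁻¹} P_H`, and `T_{ā⁻¹}^{K,H} = Ẽ|_K`, `T_{a⁻¹}^{H,K} = F̃|_H`. -/
theorem statement6 (H K : Submodule ℂ L2) [CompleteSpace H] [CompleteSpace K]
    (a b : Linf) (hab : GLinfPair a b) (haK : smulSub a K = H) :
    projL H = ((projL H).comp ((mulCLM (star b)).comp (projL K))).comp
        ((projL K).comp (mulCLM (star a))) ∧
    projL H = ((mulCLM a).comp (projL K)).comp
        ((projL K).comp ((mulCLM b).comp (projL H))) ∧
    (∀ f : K, (genToeplitz (star b) K H f : L2) =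
      ((projL H).comp ((mulCLM (star b)).comp (projL K))) (f : L2)) ∧
    (∀ f : H, (genToeplitz b H K f : L2) =
      ((projL K).comp ((mulCLM b).comp (projL H))) (f : L2)) := by
  have hba := leftInverse_mulCLM hab.2
  refine ⟨?_, ?_, coe_genToeplitz_apply _ K H, coe_genToeplitz_apply _ H K⟩
  · simpa only [projL_eq_starProjection, adjoint_mulCLM] using
      starProjection_map_eq_comp_adjoint hba haK
  · simpa only [projL_eq_starProjection] using starProjection_map_eq_comp hba haK
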